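/- For $n \geq 1$, the non-commuting graph of the group $U_{6n} = \langle a,b : a^{2n} = b^3 = 1, a^{-1}ba = b^{-1}\rangle$ is the complete $4$-partite graph $K_{2n,n,n,n}$. -/

import Mathlib

/-- The non-commuting graph of a group. -/
def noncommGraph (G : Type*) [Group G] :
    SimpleGraph {g : G // g ∉ Subgroup.center G} where
  Adj u v := u.1 * v.1 ≠ v.1 * u.1
  symm := ⟨fun _ _ h e => h e.symm⟩
  loopless := ⟨fun _ h => h rfl⟩

/-- Relations of `U_{6n} = ⟨a, b : a^(2n) = b³ = 1, a⁻¹ b a = b⁻¹⟩`. -/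
def uRels (n : ℕ) : Set (FreeGroup (Fin 2)) :=
  { (FreeGroup.of 0) ^ (2 * n), (FreeGroup.of 1) ^ 3,
    (FreeGroup.of 0)⁻¹ * FreeGroup.of 1 * FreeGroup.of 0 * FreeGroup.of 1 }


/-!
Sending `a ↦ (1, a)` and `b ↦ (b, 1)` identifies `U_{6n}` with `C₃ ⋊ C_{2n}`, where `C_{2n}` acts
on `C₃` through its quotient `C₂` by inversion. The inverse isomorphism comes from the universal
property of the semidirect product, so no normal form in the presented group is needed.

Reducing the `C_{2n}` factor modulo `2` is a surjection onto `S₃ = C₃ ⋊ C₂` with kernel `⟨a²⟩` of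
order `n`. It preserves and reflects commutation, because the commutator of two elements of a
semidirect product by an abelian group lies in `C₃`, where the reduction is the identity. So the
centre is `⟨a²⟩` and the non-commuting graph of `U_{6n}` is that of `S₃` with every vertex blown up
to `n` vertices. The non-commuting graph of `S₃` is `K_{2,1,1,1}` (the two rotations commute, each
reflection commutes only with itself), which is checked by `decide`.
-/

open Multiplicative

namespace ZMod

variable {M : Type*} [Monoid M] {m : ℕ}

lemma ofAdd_one_pow_self : ofAdd (1 : ZMod m) ^ m = 1 := by
  rw [← ofAdd_nsmul, nsmul_one, ZMod.natCast_self, ofAdd_zero]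

variable [NeZero m]

lemma ofAdd_one_pow_val (i : Multiplicative (ZMod m)) : ofAdd (1 : ZMod m) ^ (toAdd i).val = i := by
  rw [← ofAdd_nsmul, nsmul_one, ZMod.natCast_zmod_val, ofAdd_toAdd]

lemma _root_.MonoidHom.ext_mzmod {f g : Multiplicative (ZMod m) →* M}
    (h : f (ofAdd 1) = g (ofAdd 1)) : f = g :=
  MonoidHom.ext fun i => by rw [← ofAdd_one_pow_val i, map_pow, map_pow, h]

def powHom (x : M) (hx : x ^ m = 1) : Multiplicative (ZMod m) →* M where
  toFun i := x ^ (toAdd i).val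
  map_one' := by simp
  map_mul' i j := by rw [toAdd_mul, ZMod.val_add, ← pow_eq_pow_mod _ hx, pow_add]

lemma powHom_apply (x : M) (hx : x ^ m = 1) (i : Multiplicative (ZMod m)) :
    powHom x hx i = x ^ (toAdd i).val :=
  rfl

lemma powHom_ofAdd_one [Fact (1 < m)] (x : M) (hx : x ^ m = 1) : powHom x hx (ofAdd 1) = x := by
  rw [powHom_apply, toAdd_ofAdd, ZMod.val_one, pow_one]

end ZMod

namespace SemidirectProduct

section Group

variable {N G N₂ G₂ : Type*} [Group N] [Group G] [Group N₂] [Group G₂]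
  {φ : G →* MulAut N} {φ₂ : G₂ →* MulAut N₂}

instance [DecidableEq N] [DecidableEq G] : DecidableEq (N ⋊[φ] G) :=
  equivProd.injective.decidableEq

instance [Fintype N] [Fintype G] : Fintype (N ⋊[φ] G) :=
  Fintype.ofEquiv _ equivProd.symm

lemma map_surjective {fn : N →* N₂} {fg : G →* G₂}
    {h : ∀ g, fn.comp (φ g).toMonoidHom = (φ₂ (fg g)).toMonoidHom.comp fn}
    (hfn : Function.Surjective fn) (hfg : Function.Surjective fg) :
    Function.Surjective (map fn fg h) := fun x => by
  obtain ⟨a, ha⟩ := hfn x.left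
  obtain ⟨b, hb⟩ := hfg x.right
  exact ⟨⟨a, b⟩, SemidirectProduct.ext ha hb⟩

end Group

section CommGroup

variable {N G N₂ G₂ : Type*} [Group N] [CommGroup G] [Group N₂] [CommGroup G₂]
  {φ : G →* MulAut N} {φ₂ : G₂ →* MulAut N₂}

lemma commute_iff {a b : N ⋊[φ] G} : Commute a b ↔ (a * b).left = (b * a).left :=
  ⟨fun h => congrArg left h.eq, fun h => SemidirectProduct.ext h (mul_comm a.right b.right)⟩

lemma commute_map_iff {fn : N →* N₂} {fg : G →* G₂}
    {h : ∀ g, fn.comp (φ g).toMonoidHom = (φ₂ (fg g)).toMonoidHom.comp fn}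
    (hfn : Function.Injective fn) {a b : N ⋊[φ] G} :
    Commute (map fn fg h a) (map fn fg h b) ↔ Commute a b := by
  rw [commute_iff, commute_iff, ← map_mul, ← map_mul, map_left, map_left, hfn.eq_iff]

end CommGroup

end SemidirectProduct

namespace MonoidHom

variable {G H : Type*} [Group G] [Group H] {f : G →* H}

lemma apply_mem_center_iff (hf : Function.Surjective f)
    (hcomm : ∀ a b, Commute (f a) (f b) ↔ Commute a b) {a : G} :
    f a ∈ Subgroup.center H ↔ a ∈ Subgroup.center G := by
  simp only [Subgroup.mem_center_iff, ← commute_iff_eq, hf.forall, hcomm]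

lemma natCard_subtype_comp [Finite G] (hf : Function.Surjective f) (P : H → Prop) :
    Nat.card {g // P (f g)} = Nat.card {h // P h} * Nat.card f.ker := by
  have : Finite H := Finite.of_surjective f hf
  have := Fintype.ofFinite {h // P h}
  rw [← Nat.card_congr (Equiv.sigmaSubtypeFiberEquivSubtype f fun _ => Iff.rfl), Nat.card_sigma]
  calc ∑ y : {h // P h}, Nat.card {g // f g = y}
      = ∑ _y : {h // P h}, Nat.card f.ker :=
        Finset.sum_congr rfl fun y _ => Nat.card_congr (f.fiberEquivKerOfSurjective hf y)
    _ = Nat.card {h // P h} * Nat.card f.ker := by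
        rw [Finset.sum_const, smul_eq_mul, Finset.card_univ, ← Nat.card_eq_fintype_card]

end MonoidHom

namespace SimpleGraph

def isoCompleteMultipartiteOfAdjIff {V ι : Type*} {G : SimpleGraph V} (f : V → ι)
    (hG : ∀ u v, G.Adj u v ↔ f u ≠ f v) :
    G ≃g completeMultipartiteGraph fun i => {v // f v = i} where
  toEquiv := (Equiv.sigmaFiberEquiv f).symm
  map_rel_iff' {u v} := (hG u v).symm

def completeMultipartiteGraph.congrRight {ι : Type*} {V W : ι → Type*} (e : ∀ i, V i ≃ W i) :
    completeMultipartiteGraph V ≃g completeMultipartiteGraph W where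
  toEquiv := Equiv.sigmaCongrRight e
  map_rel_iff' := Iff.rfl

end SimpleGraph

def MulEquiv.noncommGraph {G H : Type*} [Group G] [Group H] (e : G ≃* H) :
    noncommGraph G ≃g noncommGraph H where
  toEquiv := e.toEquiv.subtypeEquiv fun _ =>
    not_congr (MonoidHom.apply_mem_center_iff (f := e.toMonoidHom) e.surjective
      fun _ _ => commute_map_iff e.injective).symm
  map_rel_iff' {u v} := not_congr (by
    show e u * e v = e v * e u ↔ _
    rw [← map_mul, ← map_mul, e.injective.eq_iff])

namespace U6n

open SemidirectProduct

abbrev C3 := Multiplicative (ZMod 3)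

def invAction : Multiplicative (ZMod 2) →* MulAut C3 :=
  ZMod.powHom (MulEquiv.inv C3) (by ext; simp [sq])

abbrev S3 := C3 ⋊[invAction] Multiplicative (ZMod 2)

/-- Part `0` holds the two rotations, parts `1, 2, 3` one reflection each. -/
def part (s : S3) : Fin 4 := if s.right = 1 then 0 else Fin.ofNat 4 ((toAdd s.left).val + 1)

lemma S3.mem_center_iff (s : S3) : s ∈ Subgroup.center S3 ↔ s = 1 := by
  rw [Subgroup.mem_center_iff]
  revert s
  decide

lemma S3.commute_iff_part_eq :
    ∀ s t : S3, s ≠ 1 → t ≠ 1 → (s * t = t * s ↔ part s = part t) := by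
  decide

lemma S3.card_part :
    ∀ c : Fin 4, Fintype.card {s : S3 // s ≠ 1 ∧ part s = c} = if c = 0 then 2 else 1 := by
  decide

variable (n : ℕ)

def parity : Multiplicative (ZMod (2 * n)) →* Multiplicative (ZMod 2) :=
  (ZMod.castHom (dvd_mul_right 2 n) (ZMod 2)).toAddMonoidHom.toMultiplicative

abbrev U := C3 ⋊[invAction.comp (parity n)] Multiplicative (ZMod (2 * n))

/-- Reduction modulo the central subgroup `⟨a²⟩`. -/
def toS3 : U n →* S3 := map (MonoidHom.id C3) (parity n) fun _ => rfl

def genA : PresentedGroup (uRels n) := PresentedGroup.of 0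

def genB : PresentedGroup (uRels n) := PresentedGroup.of 1

variable {n}

lemma toS3_surjective : Function.Surjective (toS3 n) :=
  map_surjective Function.surjective_id (ZMod.castHom_surjective (dvd_mul_right 2 n))

lemma commute_toS3_iff {x y : U n} : Commute (toS3 n x) (toS3 n y) ↔ Commute x y :=
  commute_map_iff Function.injective_id

lemma mem_center_iff_toS3_eq_one {x : U n} : x ∈ Subgroup.center (U n) ↔ toS3 n x = 1 := by
  rw [← MonoidHom.apply_mem_center_iff toS3_surjective fun _ _ => commute_toS3_iff,
    S3.mem_center_iff]

lemma card_ker_toS3 [NeZero n] : Nat.card (toS3 n).ker = n := by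
  have hU : Nat.card (U n) = 3 * (2 * n) := by
    rw [SemidirectProduct.card]
    simp only [Nat.card_eq_fintype_card, Fintype.card_multiplicative, ZMod.card]
  have hS : Nat.card S3 = 3 * 2 := by
    rw [SemidirectProduct.card]
    simp only [Nat.card_eq_fintype_card, Fintype.card_multiplicative, ZMod.card]
  have := (toS3 n).ker.card_mul_index
  rw [Subgroup.index_ker, MonoidHom.range_eq_top.mpr toS3_surjective, Subgroup.card_top, hU,
    hS] at this
  omega

lemma noncommGraph_adj_iff (u v : {x : U n // x ∉ Subgroup.center (U n)}) :
    (noncommGraph (U n)).Adj u v ↔ part (toS3 n u) ≠ part (toS3 n v) :=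
  not_congr <| commute_toS3_iff.symm.trans <|
    S3.commute_iff_part_eq _ _ (mem_center_iff_toS3_eq_one.not.mp u.2)
      (mem_center_iff_toS3_eq_one.not.mp v.2)

lemma card_part_toS3 [NeZero n] (c : Fin 4) :
    Nat.card {v : {x : U n // x ∉ Subgroup.center (U n)} // part (toS3 n v) = c} =
      if c = 0 then 2 * n else n := by
  rw [Nat.card_congr (Equiv.subtypeSubtypeEquivSubtypeInter _ fun x => part (toS3 n x) = c)]
  simp_rw [mem_center_iff_toS3_eq_one]
  rw [MonoidHom.natCard_subtype_comp toS3_surjective fun s => s ≠ 1 ∧ part s = c,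
    Nat.card_eq_fintype_card, S3.card_part, card_ker_toS3]
  split_ifs <;> ring

noncomputable def noncommGraphIsoCompleteMultipartite [NeZero n] :
    noncommGraph (U n) ≃g SimpleGraph.completeMultipartiteGraph
      fun i : Fin 4 => Fin (if i = 0 then 2 * n else n) :=
  (SimpleGraph.isoCompleteMultipartiteOfAdjIff _ noncommGraph_adj_iff).trans
    (SimpleGraph.completeMultipartiteGraph.congrRight fun c =>
      Finite.equivFinOfCardEq (card_part_toS3 c))

variable (n)

lemma genA_pow : genA n ^ (2 * n) = 1 := by
  have h := PresentedGroup.one_of_mem (rels := uRels n) (x := FreeGroup.of 0 ^ (2 * n))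
    (by simp [uRels])
  rwa [map_pow] at h

lemma genB_pow : genB n ^ 3 = 1 := by
  have h := PresentedGroup.one_of_mem (rels := uRels n) (x := FreeGroup.of 1 ^ 3)
    (by simp [uRels])
  rwa [map_pow] at h

lemma genA_mul_genB_mul_genA_inv : genA n * genB n * (genA n)⁻¹ = (genB n)⁻¹ := by
  have h := PresentedGroup.one_of_mem (rels := uRels n)
    (x := (FreeGroup.of 0)⁻¹ * FreeGroup.of 1 * FreeGroup.of 0 * FreeGroup.of 1) (by simp [uRels])
  simp only [map_mul, map_inv] at h
  have hinv : (genA n)⁻¹ * genB n * genA n = (genB n)⁻¹ := mul_eq_one_iff_eq_inv.mp h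
  calc genA n * genB n * (genA n)⁻¹
      = (genA n * (genB n)⁻¹ * (genA n)⁻¹)⁻¹ := by group
    _ = (genA n * ((genA n)⁻¹ * genB n * genA n) * (genA n)⁻¹)⁻¹ := by rw [hinv]
    _ = (genB n)⁻¹ := by group

variable {n}

lemma invAction_parity_ofAdd_one : invAction (parity n (ofAdd 1)) = MulEquiv.inv C3 := by
  have : parity n (ofAdd 1) = ofAdd 1 := map_one (ZMod.castHom (dvd_mul_right 2 n) (ZMod 2))
  rw [this, invAction, ZMod.powHom_ofAdd_one]

variable (n) in
def toU : PresentedGroup (uRels n) →* U n :=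
  PresentedGroup.toGroup (f := ![inr (ofAdd 1), inl (ofAdd 1)]) <| by
    intro r hr
    simp only [uRels, Set.mem_insert_iff, Set.mem_singleton_iff] at hr
    rcases hr with rfl | rfl | rfl
    · rw [map_pow, FreeGroup.lift_apply_of, Matrix.cons_val_zero, ← map_pow,
        ZMod.ofAdd_one_pow_self, map_one]
    · rw [map_pow, FreeGroup.lift_apply_of, Matrix.cons_val_one, Matrix.cons_val_zero, ← map_pow,
        ZMod.ofAdd_one_pow_self, map_one]
    · simp only [map_mul, map_inv, FreeGroup.lift_apply_of, Matrix.cons_val_zero,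
        Matrix.cons_val_one]
      rw [← map_inv, ← inl_aut_inv, ← map_mul, MonoidHom.comp_apply, invAction_parity_ofAdd_one]
      simp only [MulAut.inv_apply, MulEquiv.inv_symm, MulEquiv.inv_apply, inv_mul_cancel, map_one]

lemma toU_genA : toU n (genA n) = inr (ofAdd 1) := PresentedGroup.toGroup.of _

lemma toU_genB : toU n (genB n) = inl (ofAdd 1) := PresentedGroup.toGroup.of _

lemma powHom_genB_inv (x : C3) :
    ZMod.powHom (genB n) (genB_pow n) (MulEquiv.inv C3 x) =
      MulAut.conj (genA n) (ZMod.powHom (genB n) (genB_pow n) x) := by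
  rw [MulEquiv.inv_apply, map_inv, ZMod.powHom_apply, map_pow, MulAut.conj_apply,
    genA_mul_genB_mul_genA_inv, inv_pow]

variable [NeZero n]

instance : Fact (1 < 2 * n) := ⟨by have := NeZero.pos n; omega⟩

lemma powHom_genB_action (g : Multiplicative (ZMod (2 * n))) (x : C3) :
    ZMod.powHom (genB n) (genB_pow n) (invAction (parity n g) x) =
      MulAut.conj (ZMod.powHom (genA n) (genA_pow n) g) (ZMod.powHom (genB n) (genB_pow n) x) := by
  rw [← ZMod.ofAdd_one_pow_val g, map_pow, map_pow, map_pow, map_pow, invAction_parity_ofAdd_one,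
    ZMod.powHom_ofAdd_one]
  induction (toAdd g).val generalizing x with
  | zero => rfl
  | succ k ih => rw [pow_succ, pow_succ, MulAut.mul_apply, MulAut.mul_apply, ih, powHom_genB_inv]

variable (n) in
def ofU : U n →* PresentedGroup (uRels n) :=
  lift (ZMod.powHom (genB n) (genB_pow n)) (ZMod.powHom (genA n) (genA_pow n)) fun g =>
    MonoidHom.ext (powHom_genB_action g)

lemma ofU_inr_ofAdd_one : ofU n (inr (ofAdd 1)) = genA n := by
  rw [ofU, lift_inr, ZMod.powHom_ofAdd_one]

lemma ofU_inl_ofAdd_one : ofU n (inl (ofAdd 1)) = genB n := by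
  rw [ofU, lift_inl, ZMod.powHom_ofAdd_one]

variable (n) in
def presentedEquiv : PresentedGroup (uRels n) ≃* U n :=
  (toU n).toMulEquiv (ofU n)
    (PresentedGroup.ext fun i => by
      fin_cases i
      · exact (congrArg (ofU n) toU_genA).trans ofU_inr_ofAdd_one
      · exact (congrArg (ofU n) toU_genB).trans ofU_inl_ofAdd_one)
    (hom_ext (MonoidHom.ext_mzmod ((congrArg (toU n) ofU_inl_ofAdd_one).trans toU_genB))
      (MonoidHom.ext_mzmod ((congrArg (toU n) ofU_inr_ofAdd_one).trans toU_genA)))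

end U6n

/-- For `n ≥ 1`, the non-commuting graph of `U_{6n}` is the complete 4-partite graph
`K_{2n,n,n,n}`. -/
theorem noncommGraph_U6n (n : ℕ) (hn : 1 ≤ n) :
    Nonempty (noncommGraph (PresentedGroup (uRels n)) ≃g
      SimpleGraph.completeMultipartiteGraph
        fun i : Fin 4 => Fin (if i = 0 then 2 * n else n)) := by
  have : NeZero n := ⟨by omega⟩
  exact ⟨(U6n.presentedEquiv n).noncommGraph.trans U6n.noncommGraphIsoCompleteMultipartite⟩
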